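/- Let m, n be positive integers and h a norm on ℝ^m with generated norm H on ℝ^{m×n}. Let φ : ℝ^n → ℝ^m be Lipschitz. Then the following are equivalent: (i) θ · (φ(y) − φ(x)) ≤ h(θ) |y − x| for all θ ∈ ℝ^m and all x, y ∈ ℝ^n; (ii) for Lebesgue-almost every x ∈ ℝ^n, φ is differentiable at x and its derivative Dφ(x) ∈ ℝ^{m×n} satisfies Dφ(x) ∈ ∂H(0), i.e. h_*(Dφ(x) u) ≤ |u| for all u ∈ ℝ^n. -/

import Mathlib

open MeasureTheory

noncomputable section

/-- `ℝ^n` with the Euclidean norm. -/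
abbrev Euc (n : ℕ) := EuclideanSpace ℝ (Fin n)

/-- `h` is a norm on `ℝ^m`. -/
def IsNorm {m : ℕ} (h : (Fin m → ℝ) → ℝ) : Prop :=
  (∀ x y, h (x + y) ≤ h x + h y) ∧ (∀ (c : ℝ) (x), h (c • x) = |c| * h x) ∧
    ∀ x, h x = 0 → x = 0

/-- The dual norm `h_*` of `h`: `h_*(g) = sup { g·θ : h θ ≤ 1 }`. -/
def dualNorm {m : ℕ} (h : (Fin m → ℝ) → ℝ) (g : Fin m → ℝ) : ℝ :=
  sSup {r | ∃ θ : Fin m → ℝ, h θ ≤ 1 ∧ r = ∑ i, g i * θ i}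

/-- Matrix-vector product `M u`. -/
def matVec {m n : ℕ} (M : Fin m → Fin n → ℝ) (u : Euc n) : Fin m → ℝ :=
  fun i => ∑ j, M i j * u j

/-- Frobenius inner product `M : N`. -/
def frob {m n : ℕ} (M N : Fin m → Fin n → ℝ) : ℝ := ∑ i, ∑ j, M i j * N i j

/-- `M ∈ ∂H(0)`, i.e. `h_*(M u) ≤ 1` for all `|u| ≤ 1`. -/
def inSubdiffH {m n : ℕ} (h : (Fin m → ℝ) → ℝ) (M : Fin m → Fin n → ℝ) : Prop :=
  ∀ u : Euc n, ‖u‖ ≤ 1 → dualNorm h (matVec M u) ≤ 1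

/-- The norm `H` on `ℝ^{m×n}` generated by `h`:
`H(N) = sup { M:N : M ∈ ∂H(0) }`. -/
def genNorm {m n : ℕ} (h : (Fin m → ℝ) → ℝ) (N : Fin m → Fin n → ℝ) : ℝ :=
  sSup {r | ∃ M : Fin m → Fin n → ℝ, inSubdiffH h M ∧ r = frob M N}

/-- The rank-one matrix `θ ⊗ e`. -/
def outer {m n : ℕ} (θ : Fin m → ℝ) (e : Euc n) : Fin m → Fin n → ℝ :=
  fun i j => θ i * e j

/-- An `ℝ^{m×n}`-valued Borel measure on `ℝ^n`, given by its component signed measures. -/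
abbrev MatMeas (m n : ℕ) := Fin m → Fin n → MeasureTheory.SignedMeasure (Euc n)

/-- An `ℝ^m`-valued Borel measure on `ℝ^n`, given by its component signed measures. -/
abbrev VecMeas (m n : ℕ) := Fin m → MeasureTheory.SignedMeasure (Euc n)

/-- Integral of a function against a signed measure (via the Jordan decomposition). -/
def sInt {n : ℕ} (ν : MeasureTheory.SignedMeasure (Euc n)) (f : Euc n → ℝ) : ℝ :=
  ∫ x, f x ∂ν.toJordanDecomposition.posPart - ∫ x, f x ∂ν.toJordanDecomposition.negPart

/-- The total variation `|F|_H` of `F` with respect to the norm `H` generated by `h`: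
the supremum of `Σ_k H(F(B_k))` over countable Borel partitions `(B_k)` of `ℝ^n`. -/
def tvH {m n : ℕ} (h : (Fin m → ℝ) → ℝ) (F : MatMeas m n) : ℝ :=
  sSup {r | ∃ B : ℕ → Set (Euc n), (∀ k, MeasurableSet (B k)) ∧
    Pairwise (Function.onFun Disjoint B) ∧ (⋃ k, B k) = Set.univ ∧
    r = ∑' k, genNorm h (fun i j => F i j (B k))}

/-- `F` is supported in `K`: it vanishes on Borel sets disjoint from `K`. -/
def suppIn {m n : ℕ} (F : MatMeas m n) (K : Set (Euc n)) : Prop :=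
  ∀ B : Set (Euc n), MeasurableSet B → Disjoint B K → ∀ i j, F i j B = 0

/-- `F` is compactly supported. -/
def suppInCpt {m n : ℕ} (F : MatMeas m n) : Prop :=
  ∃ K : Set (Euc n), IsCompact K ∧ suppIn F K

/-- `F₀` is compactly supported. -/
def vSuppInCpt {m n : ℕ} (F0 : VecMeas m n) : Prop :=
  ∃ K : Set (Euc n), IsCompact K ∧
    ∀ B : Set (Euc n), MeasurableSet B → Disjoint B K → ∀ i, F0 i B = 0

/-- The Jacobian matrix `Dψ(x) ∈ ℝ^{m×n}` of `ψ : ℝ^n → ℝ^m`. -/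
def jac {m n : ℕ} (ψ : Euc n → (Fin m → ℝ)) (x : Euc n) : Fin m → Fin n → ℝ :=
  fun i j => fderiv ℝ ψ x (EuclideanSpace.single j 1) i

/-- `∂F = F₀`, i.e. `∫ Dψ : dF = ∫ ψ · dF₀` for all smooth compactly supported `ψ`. -/
def isBoundary {m n : ℕ} (F : MatMeas m n) (F0 : VecMeas m n) : Prop :=
  ∀ ψ : Euc n → (Fin m → ℝ), ContDiff ℝ (⊤ : ℕ∞) ψ → HasCompactSupport ψ →
    (∑ i, ∑ j, sInt (F i j) fun x => jac ψ x i j) = ∑ i, sInt (F0 i) fun x => ψ x i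

/-- `φ` is an admissible dual potential: `h_*(φ(y) - φ(x)) ≤ |y - x|`. -/
def admissible {m n : ℕ} (h : (Fin m → ℝ) → ℝ) (φ : Euc n → Fin m → ℝ) : Prop :=
  ∀ x y : Euc n, dualNorm h (φ y - φ x) ≤ ‖y - x‖

/-- The dual objective `∫ φ · dF₀`. -/
def intDual {m n : ℕ} (F0 : VecMeas m n) (φ : Euc n → Fin m → ℝ) : ℝ :=
  ∑ i, sInt (F0 i) fun x => φ x i

/-! Pairing with a covector `θ` reduces everything to the scalar Lipschitz functions `θ · φ`,
since `h_*(g) ≤ a` iff `θ · g ≤ h(θ) a` for every `θ`. The forward direction is then a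
difference quotient at the points of differentiability given by Rademacher's theorem.

For the converse, let `f` be Lipschitz with `∂_v f ≤ C` almost everywhere and let `g ≥ 0` be a
continuous compactly supported test function. By dominated convergence the function
`t ↦ ∫ f(x + t v) g(x) dx` has right derivative `∫ ∂_v f(y) g(y - t v) dy ≤ C ∫ g`, so the mean
value inequality gives `∫ (f(x + v) - f(x)) g(x) dx ≤ C ∫ g`. Testing against bump functions
turns this into `f(x + v) - f(x) ≤ C` at every point, by continuity. -/

open Filter Set Topology

namespace IsNorm

variable {m : ℕ} {h : (Fin m → ℝ) → ℝ}

def toSeminorm (hh : IsNorm h) : Seminorm ℝ (Fin m → ℝ) :=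
  Seminorm.of h hh.1 fun c x => by rw [hh.2.1, Real.norm_eq_abs]

theorem map_zero (hh : IsNorm h) : h 0 = 0 :=
  _root_.map_zero hh.toSeminorm

theorem nonneg (hh : IsNorm h) (θ : Fin m → ℝ) : 0 ≤ h θ :=
  apply_nonneg hh.toSeminorm θ

theorem continuous (hh : IsNorm h) : Continuous h :=
  continuousOn_univ.1 (hh.toSeminorm.convexOn.continuousOn isOpen_univ)

theorem exists_pos_mul_norm_le (hh : IsNorm h) : ∃ c > 0, ∀ θ, c * ‖θ‖ ≤ h θ := by
  rcases subsingleton_or_nontrivial (Fin m → ℝ) with _ | _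
  · exact ⟨1, one_pos, fun θ => by simp [Subsingleton.elim θ 0, hh.map_zero]⟩
  obtain ⟨θ₀, hθ₀, hmin⟩ := (isCompact_sphere (0 : Fin m → ℝ) 1).exists_isMinOn
    (NormedSpace.sphere_nonempty.2 zero_le_one) hh.continuous.continuousOn
  have hθ₀0 : θ₀ ≠ 0 := ne_zero_of_mem_unit_sphere ⟨θ₀, hθ₀⟩
  refine ⟨h θ₀, (hh.nonneg θ₀).lt_of_ne fun h0 => hθ₀0 (hh.2.2 θ₀ h0.symm), fun θ => ?_⟩
  rcases eq_or_ne θ 0 with rfl | hθ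
  · simp [hh.map_zero]
  have hθn : 0 < ‖θ‖ := norm_pos_iff.2 hθ
  have hunit : ‖θ‖⁻¹ • θ ∈ Metric.sphere (0 : Fin m → ℝ) 1 := by
    simp [norm_smul, hθn.ne']
  have : h θ₀ ≤ h (‖θ‖⁻¹ • θ) := hmin hunit
  rw [hh.2.1, abs_of_pos (inv_pos.2 hθn)] at this
  rwa [← le_inv_mul_iff₀' hθn]

theorem bddAbove_dualNorm_set (hh : IsNorm h) (g : Fin m → ℝ) :
    BddAbove {r | ∃ θ : Fin m → ℝ, h θ ≤ 1 ∧ r = ∑ i, g i * θ i} := by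
  obtain ⟨c, hc, hle⟩ := hh.exists_pos_mul_norm_le
  refine ⟨∑ i, |g i| * c⁻¹, ?_⟩
  rintro _ ⟨θ, hθ, rfl⟩
  refine Finset.sum_le_sum fun i _ => ?_
  have hθi : |θ i| ≤ c⁻¹ := by
    rw [← mul_one c⁻¹, le_inv_mul_iff₀ hc]
    exact (mul_le_mul_of_nonneg_left (norm_le_pi_norm θ i) hc.le).trans ((hle θ).trans hθ)
  calc g i * θ i ≤ |g i| * |θ i| := (le_abs_self _).trans (abs_mul _ _).le
    _ ≤ |g i| * c⁻¹ := mul_le_mul_of_nonneg_left hθi (abs_nonneg _)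

theorem dualNorm_le_iff (hh : IsNorm h) {g : Fin m → ℝ} {a : ℝ} (ha : 0 ≤ a) :
    dualNorm h g ≤ a ↔ ∀ θ, ∑ i, θ i * g i ≤ h θ * a := by
  constructor
  · intro hg θ
    rcases (hh.nonneg θ).eq_or_lt with h0 | h0
    · simp [hh.2.2 θ h0.symm, hh.map_zero]
    have hunit : h ((h θ)⁻¹ • θ) ≤ 1 := by
      rw [hh.2.1, abs_of_pos (inv_pos.2 h0), inv_mul_cancel₀ h0.ne']
    have := (le_csSup (hh.bddAbove_dualNorm_set g) ⟨_, hunit, rfl⟩).trans hg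
    simp only [Pi.smul_apply, smul_eq_mul, mul_left_comm _ (h θ)⁻¹, ← Finset.mul_sum,
      inv_mul_le_iff₀ h0] at this
    simpa only [mul_comm (θ _)] using this
  · intro hg
    refine csSup_le ⟨0, 0, by simp [hh.map_zero]⟩ ?_
    rintro _ ⟨θ, hθ, rfl⟩
    calc ∑ i, g i * θ i = ∑ i, θ i * g i := by simp only [mul_comm]
      _ ≤ h θ * a := hg θ
      _ ≤ a := mul_le_of_le_one_left ha hθ

end IsNorm

theorem hasDerivWithinAt_Ici_of_tendsto_slope_zero_right {F : ℝ → ℝ} {t D : ℝ}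
    (hF : Tendsto (fun s => s⁻¹ * (F (t + s) - F t)) (𝓝[>] 0) (𝓝 D)) :
    HasDerivWithinAt F D (Ici t) t := by
  have hmap : 𝓝[>] t = map (t + ·) (𝓝[>] 0) := by simp
  rw [← hasDerivWithinAt_Ioi_iff_Ici,
    hasDerivWithinAt_iff_tendsto_slope' (by simp : t ∉ Ioi t), hmap, tendsto_map'_iff]
  refine hF.congr fun s => ?_
  simp [slope]

theorem HasFDerivAt.le_mul_norm_of_sub_le {E : Type*} [NormedAddCommGroup E] [NormedSpace ℝ E]
    {f : E → ℝ} {f' : E →L[ℝ] ℝ} {x : E} {C : ℝ} (hf : HasFDerivAt f f' x)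
    (hC : ∀ y, f y - f x ≤ C * ‖y - x‖) (u : E) : f' u ≤ C * ‖u‖ := by
  have hcurve : HasDerivAt (fun t : ℝ => x + t • u) u 0 := by
    simpa using ((hasDerivAt_id (0 : ℝ)).smul_const u).const_add x
  have hline : HasDerivAt (fun t : ℝ => f (x + t • u)) (f' u) 0 :=
    hf.comp_hasDerivAt_of_eq 0 hcurve (by simp)
  refine le_of_tendsto hline.tendsto_slope_zero_right ?_
  filter_upwards [self_mem_nhdsWithin] with t (ht : 0 < t)
  have := hC (x + t • u)
  simp only [zero_add, zero_smul, add_zero, add_sub_cancel_left, norm_smul, Real.norm_eq_abs,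
    _root_.abs_of_pos ht] at this ⊢
  rw [smul_eq_mul, inv_mul_le_iff₀ ht]
  linarith

section LineDeriv

variable {E : Type*} [NormedAddCommGroup E] [NormedSpace ℝ E] [MeasurableSpace E] [BorelSpace E]
  {μ : Measure E} [μ.IsAddHaarMeasure] {f g : E → ℝ} {L : NNReal} {v : E} {C : ℝ}

theorem integral_comp_add_smul_mul_sub (hf : Continuous f) (hg : Continuous g)
    (hgc : HasCompactSupport g) (t s : ℝ) :
    ∫ x, f (x + (t + s) • v) * g x ∂μ - ∫ x, f (x + t • v) * g x ∂μ =
      ∫ y, (f (y + s • v) - f y) * g (y - t • v) ∂μ := by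
  have hint : ∀ w, Integrable (fun x => f (x + w) * g x) μ := fun w =>
    ((hf.comp (continuous_add_const w)).mul hg).integrable_of_hasCompactSupport hgc.mul_left
  rw [← integral_sub (hint _) (hint _),
    ← integral_add_right_eq_self (fun y => (f (y + s • v) - f y) * g (y - t • v)) (t • v)]
  congr 1 with x
  rw [add_sub_cancel_right, add_smul, add_assoc, sub_mul]

theorem LipschitzWith.lipschitzWith_integral_comp_add_smul_mul (hf : LipschitzWith L f)
    (hg : Continuous g) (hgc : HasCompactSupport g) :
    LipschitzWith (Real.toNNReal (L * ‖v‖ * ∫ x, |g x| ∂μ))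
      (fun t : ℝ => ∫ x, f (x + t • v) * g x ∂μ) := by
  refine LipschitzWith.of_dist_le' fun a b => ?_
  have hab := integral_comp_add_smul_mul_sub (μ := μ) (v := v) hf.continuous hg hgc b (a - b)
  rw [add_sub_cancel] at hab
  rw [Real.dist_eq, Real.dist_eq, ← Real.norm_eq_abs, hab]
  calc ‖∫ y, (f (y + (a - b) • v) - f y) * g (y - b • v) ∂μ‖
      ≤ ∫ y, L * ‖v‖ * |a - b| * |g (y - b • v)| ∂μ := by
        refine norm_integral_le_of_norm_le
          (((hg.integrable_of_hasCompactSupport hgc).comp_sub_right (b • v)).abs.const_mul _)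
          (Eventually.of_forall fun y => ?_)
        rw [norm_mul, Real.norm_eq_abs, Real.norm_eq_abs]
        gcongr
        have := hf.norm_sub_le (y + (a - b) • v) y
        rw [add_sub_cancel_left, norm_smul, Real.norm_eq_abs, Real.norm_eq_abs] at this
        exact this.trans_eq (by ring)
    _ = L * ‖v‖ * (∫ x, |g x| ∂μ) * |a - b| := by
        rw [integral_const_mul, integral_sub_right_eq_self (fun x => |g x|)]; ring

theorem LipschitzWith.hasDerivWithinAt_integral_comp_add_smul_mul [FiniteDimensional ℝ E]
    (hf : LipschitzWith L f) (hg : Continuous g) (hgc : HasCompactSupport g) (t : ℝ) :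
    HasDerivWithinAt (fun t : ℝ => ∫ x, f (x + t • v) * g x ∂μ)
      (∫ y, lineDeriv ℝ f y v * g (y - t • v) ∂μ) (Ici t) t := by
  refine hasDerivWithinAt_Ici_of_tendsto_slope_zero_right ?_
  refine (hf.integral_inv_smul_sub_mul_tendsto_integral_lineDeriv_mul
    ((hg.integrable_of_hasCompactSupport hgc).comp_sub_right (t • v)) v).congr fun s => ?_
  rw [integral_comp_add_smul_mul_sub hf.continuous hg hgc, ← integral_const_mul]
  simp only [smul_eq_mul, mul_assoc]

theorem LipschitzWith.integral_sub_mul_le_of_ae_lineDeriv_le [FiniteDimensional ℝ E]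
    (hf : LipschitzWith L f) (hv : ∀ᵐ x ∂μ, lineDeriv ℝ f x v ≤ C) (hg : Continuous g)
    (hgc : HasCompactSupport g) (hg0 : 0 ≤ g) :
    ∫ x, (f (x + v) - f x) * g x ∂μ ≤ C * ∫ x, g x ∂μ := by
  set F : ℝ → ℝ := fun t => ∫ x, f (x + t • v) * g x ∂μ
  have hderiv_le : ∀ t : ℝ, ∫ y, lineDeriv ℝ f y v * g (y - t • v) ∂μ ≤ C * ∫ x, g x ∂μ := fun t => by
    have hgt := (hg.integrable_of_hasCompactSupport hgc).comp_sub_right (μ := μ) (t • v)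
    calc ∫ y, lineDeriv ℝ f y v * g (y - t • v) ∂μ ≤ ∫ y, C * g (y - t • v) ∂μ := by
          refine integral_mono_ae (hgt.bdd_mul (aestronglyMeasurable_lineDeriv hf.continuous μ)
            (Eventually.of_forall fun y => norm_lineDeriv_le_of_lipschitz ℝ hf))
            (hgt.const_mul C) ?_
          filter_upwards [hv] with y hy
          exact mul_le_mul_of_nonneg_right hy (hg0 _)
      _ = C * ∫ x, g x ∂μ := by rw [integral_const_mul, integral_sub_right_eq_self]
  have hB : ∀ t : ℝ, HasDerivWithinAt (fun s => F 0 + (C * ∫ x, g x ∂μ) * s)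
      (C * ∫ x, g x ∂μ) (Ici t) t := fun t => by
    simpa using (((hasDerivAt_id t).const_mul (C * ∫ x, g x ∂μ)).const_add (F 0)).hasDerivWithinAt
  have hF1 : F 1 ≤ F 0 + (C * ∫ x, g x ∂μ) * 1 :=
    image_le_of_deriv_right_le_deriv_boundary
      (hf.lipschitzWith_integral_comp_add_smul_mul hg hgc).continuous.continuousOn
      (fun t _ => hf.hasDerivWithinAt_integral_comp_add_smul_mul hg hgc t)
      (by rw [mul_zero, add_zero])
      (by fun_prop) (fun t _ => hB t) (fun t _ => hderiv_le t) (right_mem_Icc.2 zero_le_one)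
  have h01 := integral_comp_add_smul_mul_sub (μ := μ) (v := v) hf.continuous hg hgc 0 1
  simp only [zero_add, one_smul, zero_smul, add_zero, sub_zero] at h01
  simp only [F, zero_smul, one_smul, add_zero, mul_one] at hF1
  linarith

theorem Continuous.nonpos_of_forall_integral_mul_nonpos [FiniteDimensional ℝ E] {G : E → ℝ}
    (hG : Continuous G)
    (hint : ∀ g : E → ℝ, Continuous g → HasCompactSupport g → 0 ≤ g → ∫ x, G x * g x ∂μ ≤ 0)
    (x : E) : G x ≤ 0 := by
  by_contra! hx
  obtain ⟨r, hr, hball⟩ := Metric.isOpen_iff.1 (isOpen_lt continuous_const hG) x hx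
  let b : ContDiffBump x := ⟨r / 2, r, half_pos hr, half_lt_self hr⟩
  have hGb : ∀ y, 0 ≤ G y * b y := fun y => by
    by_cases hy : y ∈ Metric.ball x r
    · exact mul_nonneg (hball hy).le b.nonneg
    · rw [b.zero_of_le_dist (not_lt.1 hy), mul_zero]
  have hpos : 0 < ∫ y, G y * b y ∂μ :=
    (hG.mul b.continuous).integral_pos_of_hasCompactSupport_nonneg_nonzero
      b.hasCompactSupport.mul_left hGb
      (mul_ne_zero hx.ne' (b.pos_of_mem_ball (Metric.mem_ball_self hr)).ne')
  exact (hint b b.continuous b.hasCompactSupport fun _ => b.nonneg).not_gt hpos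

theorem LipschitzWith.sub_le_of_ae_lineDeriv_le [FiniteDimensional ℝ E]
    (hf : LipschitzWith L f) (hv : ∀ᵐ x ∂μ, lineDeriv ℝ f x v ≤ C) (x : E) :
    f (x + v) - f x ≤ C := by
  refine sub_nonpos.1 <| Continuous.nonpos_of_forall_integral_mul_nonpos (μ := μ)
    (G := fun x => f (x + v) - f x - C) (by have := hf.continuous; fun_prop)
    (fun g hg hgc hg0 => ?_) x
  have hint : Integrable (fun x => (f (x + v) - f x) * g x) μ :=
    ((hf.continuous.comp (continuous_add_const v)).sub hf.continuous |>.mul hg)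
      |>.integrable_of_hasCompactSupport hgc.mul_left
  simp only [sub_mul _ C]
  rw [integral_sub hint ((hg.integrable_of_hasCompactSupport hgc).const_mul C),
    integral_const_mul, sub_nonpos]
  exact hf.integral_sub_mul_le_of_ae_lineDeriv_le hv hg hgc hg0

end LineDeriv

theorem statement6_general {m n : ℕ}
    (h : (Fin m → ℝ) → ℝ) (hh : IsNorm h)
    (φ : Euc n → Fin m → ℝ) (hLip : ∃ C : NNReal, LipschitzWith C φ) :
    (∀ (θ : Fin m → ℝ) (x y : Euc n), (∑ i, θ i * (φ y i - φ x i)) ≤ h θ * ‖y - x‖) ↔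
    (∀ᵐ x ∂(volume : Measure (Euc n)), DifferentiableAt ℝ φ x ∧
      ∀ u : Euc n, dualNorm h (fderiv ℝ φ x u) ≤ ‖u‖) := by
  obtain ⟨K, hK⟩ := hLip
  let ℓ (θ : Fin m → ℝ) : (Fin m → ℝ) →L[ℝ] ℝ :=
    LinearMap.toContinuousLinearMap (dotProductBilin ℝ ℝ θ)
  have hℓφ (θ : Fin m → ℝ) {x : Euc n} (hx : DifferentiableAt ℝ φ x) :
      HasFDerivAt (fun z => ℓ θ (φ z)) ((ℓ θ).comp (fderiv ℝ φ x)) x :=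
    (ℓ θ).hasFDerivAt.comp x hx.hasFDerivAt
  simp only [IsNorm.dualNorm_le_iff hh (norm_nonneg _)]
  constructor
  · intro H
    filter_upwards [hK.ae_differentiableAt] with x hx
    refine ⟨hx, fun u θ => (hℓφ θ hx).le_mul_norm_of_sub_le (fun y => ?_) u⟩
    rw [← map_sub]
    exact H θ x y
  · intro H θ x y
    have hline : ∀ᵐ z ∂(volume : Measure (Euc n)),
        lineDeriv ℝ (fun z => ℓ θ (φ z)) z (y - x) ≤ h θ * ‖y - x‖ := by
      filter_upwards [H] with z ⟨hz, hbound⟩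
      rw [((hℓφ θ hz).hasLineDerivAt _).lineDeriv]
      exact hbound (y - x) θ
    have := ((ℓ θ).lipschitz.comp hK).sub_le_of_ae_lineDeriv_le hline x
    rwa [add_sub_cancel, Function.comp_apply, Function.comp_apply, ← map_sub] at this

/-- for Lipschitz `φ`, the constraint
`θ · (φ(y) - φ(x)) ≤ h(θ)|y - x|` for all `θ, x, y` is equivalent to `φ` being
differentiable a.e. with `Dφ(x) ∈ ∂H(0)`, i.e. `h_*(Dφ(x)u) ≤ |u|` for all `u`. -/
theorem statement6 {m n : ℕ} (hm : 0 < m) (hn : 0 < n)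
    (h : (Fin m → ℝ) → ℝ) (hh : IsNorm h)
    (φ : Euc n → Fin m → ℝ) (hLip : ∃ C : NNReal, LipschitzWith C φ) :
    (∀ (θ : Fin m → ℝ) (x y : Euc n), (∑ i, θ i * (φ y i - φ x i)) ≤ h θ * ‖y - x‖) ↔
    (∀ᵐ x ∂(volume : Measure (Euc n)), DifferentiableAt ℝ φ x ∧
      ∀ u : Euc n, dualNorm h (fderiv ℝ φ x u) ≤ ‖u‖) :=
  statement6_general h hh φ hLip
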